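/- Classification of marked B-polygons: let \alpha \subset Z^2 be a 2-dimensional marked B-polygon (every triangle with vertices in \alpha is a pyramid of lattice height 1 over a marked side of the convex hull of \alpha). Then, up to a lattice-affine transformation, \alpha is one of: (1) a B_1-marked polygon: a pyramid of lattice height 1 with base on a marked side; (2) a B_2-marked polygon: \alpha is contained in a strip {0 \le x_1 \le 1} and both sides of the convex hull on the boundary lines x_1 = 0 and x_1 = 1 are marked; (3) a flat border marked polygon: \alpha = {(0,0), (a,0), (0,1), (1,1)} with a > 1, and all sides of the convex hull except the segment [(0,1),(1,1)] are marked. -/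

import Mathlib

/-- The value of the integral affine function with linear part `u` at `p`. -/
def lval (u p : ℤ × ℤ) : ℤ := u.1 * p.1 + u.2 * p.2

/-- `u` is primitive and the line `{lval u · = c}` supports `α` from below. -/
def IsSupp (α : Finset (ℤ × ℤ)) (u : ℤ × ℤ) (c : ℤ) : Prop :=
  IsCoprime u.1 u.2 ∧ ∀ p ∈ α, c ≤ lval u p

/-- `s` is a side (edge) of the convex hull of `α`: the set of points of `α` lying on a
supporting line, with at least two points. -/
def IsSide (α : Finset (ℤ × ℤ)) (s : Finset (ℤ × ℤ)) : Prop :=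
  ∃ u c, IsSupp α u c ∧ s = α.filter (fun p => lval u p = c) ∧ 2 ≤ s.card

/-- Three non-collinear points of `ℤ²`. -/
def NotCollinear (p q r : ℤ × ℤ) : Prop :=
  (q.1 - p.1) * (r.2 - p.2) ≠ (q.2 - p.2) * (r.1 - p.1)

/-- A finite subset of `ℤ²` is 2-dimensional: it contains three non-collinear points. -/
def TwoDim (S : Finset (ℤ × ℤ)) : Prop :=
  ∃ p ∈ S, ∃ q ∈ S, ∃ r ∈ S, NotCollinear p q r

/-- The triangle `p q r` is a marked B-triangle for `(α, M)`: there is a marked side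
`s ∈ M` (with supporting data `(u, c)`) such that the triangle is a pyramid of lattice
height 1 whose base segment lies on the line of `s`. -/
def IsMarkedBTriangle (α : Finset (ℤ × ℤ)) (M : Finset (Finset (ℤ × ℤ)))
    (p q r : ℤ × ℤ) : Prop :=
  ∃ s ∈ M, ∃ u c, IsSupp α u c ∧ s = α.filter (fun x => lval u x = c) ∧
    ((lval u p = c ∧ lval u q = c ∧ lval u r = c + 1) ∨
     (lval u p = c ∧ lval u r = c ∧ lval u q = c + 1) ∨
     (lval u q = c ∧ lval u r = c ∧ lval u p = c + 1))

/-- A marked B-polygon: a finite 2-dimensional subset `α ⊆ ℤ²` with a set `M` of marked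
sides of its convex hull, such that every 2-dimensional triangle with vertices in `α` is a
marked B-triangle. -/
def IsMarkedBPolygon (α : Finset (ℤ × ℤ)) (M : Finset (Finset (ℤ × ℤ))) : Prop :=
  TwoDim α ∧ (∀ s ∈ M, IsSide α s) ∧
    ∀ p ∈ α, ∀ q ∈ α, ∀ r ∈ α, NotCollinear p q r → IsMarkedBTriangle α M p q r

/-- B₁-marked polygon: a pyramid of lattice height 1 with base on a marked side. -/
def B1Shape (α : Finset (ℤ × ℤ)) (M : Finset (Finset (ℤ × ℤ))) : Prop :=
  ∃ s ∈ M, ∃ u c, IsSupp α u c ∧ s = α.filter (fun x => lval u x = c) ∧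
    ∃ apex ∈ α, lval u apex = c + 1 ∧ ∀ p ∈ α, p ∉ s → p = apex

/-- B₂-marked polygon: `α` is contained in a lattice strip of width 1 and both sides of the
convex hull on the boundary of the strip are marked. -/
def B2Shape (α : Finset (ℤ × ℤ)) (M : Finset (Finset (ℤ × ℤ))) : Prop :=
  ∃ u c, IsSupp α u c ∧ IsSupp α (-u) (-(c + 1)) ∧
    α.filter (fun x => lval u x = c) ∈ M ∧
    α.filter (fun x => lval u x = c + 1) ∈ M ∧
    ∀ p ∈ α, lval u p = c ∨ lval u p = c + 1

/-- Flat border marked polygon: `α = {(0,0), (a,0), (0,1), (1,1)}` with `a > 1` and all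
sides of the convex hull except `[(0,1),(1,1)]` are marked. -/
def FlatShape (α : Finset (ℤ × ℤ)) (M : Finset (Finset (ℤ × ℤ))) : Prop :=
  ∃ a : ℤ, 1 < a ∧ α = {(0, 0), (a, 0), (0, 1), (1, 1)} ∧
    M = ({{(0, 0), (a, 0)}, {(0, 0), (0, 1)}, {(a, 0), (1, 1)}} : Finset (Finset (ℤ × ℤ)))

/-!
Suppose every marked side had a point of `α` at lattice height at least 2 over it. For two
points `X ≠ Y` of such a side `s` and a far point `r`, the triangle `X Y r` must be served by a
marked side `s'` through `r` and (say) `X`, with `Y` at height 1 over `s'`; hence `Y - X` is a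
primitive vector of `s`. The same argument on `s'`, which also has a far point, shows that
`r - X` is primitive on `s'`; then `r` lies at height 1 over `s`, a contradiction.

So `α` lies in the strip of width 1 over some marked side, and a unimodular map makes it the
horizontal strip `0 ≤ y ≤ 1` with marked bottom. A single top point gives `B₁`, a marked top gives
`B₂`. Otherwise each triangle formed by the two extreme top points and a bottom point is served
by a slanted side; this forces `α = {(xb,0), (xB,0), (xt,1), (xt+1,1)}` with both slanted sides
marked, which is `B₂` if `xB = xb + 1` and the flat border polygon after a shear otherwise.
-/

open Finset

def cross (x y : ℤ × ℤ) : ℤ := x.1 * y.2 - x.2 * y.1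

def perp (u : ℤ × ℤ) : ℤ × ℤ := (-u.2, u.1)

section LinearAlgebra

variable {u v d : ℤ × ℤ}

lemma lval_neg_left (u p : ℤ × ℤ) : lval (-u) p = -lval u p := by
  simp only [lval, Prod.fst_neg, Prod.snd_neg]; ring

lemma lval_neg_right (u p : ℤ × ℤ) : lval u (-p) = -lval u p := by
  simp only [lval, Prod.fst_neg, Prod.snd_neg]; ring

lemma lval_sub_right (u p q : ℤ × ℤ) : lval u (p - q) = lval u p - lval u q := by
  simp only [lval, Prod.fst_sub, Prod.snd_sub]; ring

lemma lval_smul_right (k : ℤ) (u p : ℤ × ℤ) : lval u (k • p) = k * lval u p := by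
  simp only [lval, Prod.smul_fst, Prod.smul_snd, smul_eq_mul]; ring

lemma lval_perp (u v : ℤ × ℤ) : lval v (perp u) = cross u v := by
  simp only [lval, perp, cross]; ring

lemma cross_swap (u v : ℤ × ℤ) : cross v u = -cross u v := by
  simp only [cross]; ring

lemma cross_smul_perp_left (k : ℤ) (u e : ℤ × ℤ) : cross (k • perp u) e = -(k * lval u e) := by
  simp only [cross, perp, lval, Prod.smul_fst, Prod.smul_snd, smul_eq_mul]; ring

lemma notCollinear_iff_cross (p q r : ℤ × ℤ) :
    NotCollinear p q r ↔ cross (q - p) (r - p) ≠ 0 := by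
  simp only [NotCollinear, cross, Prod.fst_sub, Prod.snd_sub, ne_eq, sub_eq_zero]

lemma exists_eq_smul_perp (hu : IsCoprime u.1 u.2) (hd : lval u d = 0) :
    ∃ k : ℤ, d = k • perp u := by
  obtain ⟨a, b, hab⟩ := hu
  refine ⟨a * d.2 - b * d.1, Prod.ext ?_ ?_⟩ <;>
    simp only [lval, perp, Prod.smul_fst, Prod.smul_snd, smul_eq_mul] at hd ⊢
  · linear_combination -d.1 * hab + a * hd
  · linear_combination -d.2 * hab + b * hd

lemma eq_or_eq_neg_of_cross_eq_zero (hu : IsCoprime u.1 u.2) (hv : IsCoprime v.1 v.2)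
    (h : cross u v = 0) : v = u ∨ v = -u := by
  obtain ⟨k, hk⟩ := exists_eq_smul_perp hu (d := perp v)
    (by rw [lval_perp, cross_swap, h, neg_zero])
  have hvk : v = k • u := by
    simp only [perp, Prod.ext_iff, Prod.smul_fst, Prod.smul_snd, smul_eq_mul] at hk
    exact Prod.ext (by simpa using hk.2) (by simpa using hk.1)
  have hunit : IsUnit k := by
    rw [hvk] at hv
    exact isCoprime_self.mp (hv.of_mul_left_left.of_mul_right_left)
  rcases Int.isUnit_iff.mp hunit with rfl | rfl
  · exact Or.inl (by simpa using hvk)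
  · exact Or.inr (by simpa using hvk)

lemma eq_or_eq_neg_of_lval_eq_zero (hu : IsCoprime u.1 u.2) (hv : IsCoprime v.1 v.2)
    (hd : d ≠ 0) (hud : lval u d = 0) (hvd : lval v d = 0) : v = u ∨ v = -u := by
  obtain ⟨k, rfl⟩ := exists_eq_smul_perp hu hud
  rw [lval_smul_right, lval_perp] at hvd
  have hk : k ≠ 0 := by rintro rfl; exact hd (zero_smul ℤ _)
  exact eq_or_eq_neg_of_cross_eq_zero hu hv ((mul_eq_zero.mp hvd).resolve_left hk)

lemma eq_or_eq_neg_of_mem_line {P Q : ℤ × ℤ} {c : ℤ} (hu : IsCoprime u.1 u.2)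
    (hv : IsCoprime v.1 v.2) (hPQ : P ≠ Q) (hP : lval u P = c) (hQ : lval u Q = c)
    (hvPQ : lval v P = lval v Q) :
    (u = v ∧ c = lval v P) ∨ (u = -v ∧ c = -lval v P) := by
  have hd : Q - P ≠ 0 := sub_ne_zero.mpr hPQ.symm
  rcases eq_or_eq_neg_of_lval_eq_zero hv hu hd (by rw [lval_sub_right, hvPQ, sub_self])
    (by rw [lval_sub_right, hP, hQ, sub_self]) with rfl | rfl
  · exact Or.inl ⟨rfl, hP.symm⟩
  · exact Or.inr ⟨rfl, by rw [← hP, lval_neg_left]⟩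

lemma lval_zero_one (p : ℤ × ℤ) : lval (0, 1) p = p.2 := by simp [lval]

lemma isCoprime_zero_one : IsCoprime ((0, 1) : ℤ × ℤ).1 ((0, 1) : ℤ × ℤ).2 :=
  isCoprime_zero_left.mpr isUnit_one

end LinearAlgebra

section Collinearity

variable {u P Q R : ℤ × ℤ} {c : ℤ}

lemma notCollinear_of_lval (hu : IsCoprime u.1 u.2) (hPQ : P ≠ Q) (hP : lval u P = c)
    (hQ : lval u Q = c) (hR : lval u R ≠ c) : NotCollinear P Q R := by
  obtain ⟨k, hk⟩ := exists_eq_smul_perp hu (d := Q - P) (by rw [lval_sub_right, hP, hQ, sub_self])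
  have hk0 : k ≠ 0 := by rintro rfl; exact sub_ne_zero.mpr hPQ.symm (by simpa using hk)
  rw [notCollinear_iff_cross, hk, cross_smul_perp_left, lval_sub_right, hP, neg_ne_zero]
  exact mul_ne_zero hk0 (sub_ne_zero.mpr hR)

lemma not_notCollinear_of_lval (hu : IsCoprime u.1 u.2) (hP : lval u P = c)
    (hQ : lval u Q = c) (hR : lval u R = c) : ¬ NotCollinear P Q R := by
  obtain ⟨k, hk⟩ := exists_eq_smul_perp hu (d := Q - P) (by rw [lval_sub_right, hP, hQ, sub_self])
  rw [notCollinear_iff_cross, hk, cross_smul_perp_left, lval_sub_right, hP, hR]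
  simp

end Collinearity

def IsLatticeAffine (T : ℤ × ℤ → ℤ × ℤ) : Prop :=
  ∃ a b c d e f : ℤ, (a * d - b * c = 1 ∨ a * d - b * c = -1) ∧
    ∀ p, T p = (a * p.1 + b * p.2 + e, c * p.1 + d * p.2 + f)

lemma isLatticeAffine_id : IsLatticeAffine id :=
  ⟨1, 0, 0, 1, 0, 0, Or.inl (by norm_num), fun p => by simp⟩

lemma IsLatticeAffine.comp {T T' : ℤ × ℤ → ℤ × ℤ} (hT' : IsLatticeAffine T')
    (hT : IsLatticeAffine T) : IsLatticeAffine (T' ∘ T) := by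
  obtain ⟨a', b', c', d', e', f', hdet', hT'⟩ := hT'
  obtain ⟨a, b, c, d, e, f, hdet, hT⟩ := hT
  refine ⟨a' * a + b' * c, a' * b + b' * d, c' * a + d' * c, c' * b + d' * d,
    a' * e + b' * f + e', c' * e + d' * f + f', ?_, fun p => ?_⟩
  · have hmul : (a' * a + b' * c) * (c' * b + d' * d) - (a' * b + b' * d) * (c' * a + d' * c) =
        (a' * d' - b' * c') * (a * d - b * c) := by ring
    rw [hmul]
    rcases hdet' with h' | h' <;> rcases hdet with h | h <;> simp [h, h']
  · simp only [Function.comp_apply, hT', hT, Prod.mk.injEq]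
    constructor <;> ring

def HasNormalForm (α : Finset (ℤ × ℤ)) (M : Finset (Finset (ℤ × ℤ))) : Prop :=
  ∃ T : ℤ × ℤ → ℤ × ℤ, IsLatticeAffine T ∧
    (B1Shape (α.image T) (M.image (image T)) ∨ B2Shape (α.image T) (M.image (image T)) ∨
      FlatShape (α.image T) (M.image (image T)))

namespace HasNormalForm

variable {α : Finset (ℤ × ℤ)} {M : Finset (Finset (ℤ × ℤ))}

lemma of_shape (h : B1Shape α M ∨ B2Shape α M ∨ FlatShape α M) : HasNormalForm α M := by
  have himage : (image id : Finset (ℤ × ℤ) → Finset (ℤ × ℤ)) = id := funext fun _ => image_id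
  exact ⟨id, isLatticeAffine_id, by simpa only [image_id, himage] using h⟩

lemma of_image {T : ℤ × ℤ → ℤ × ℤ} (hT : IsLatticeAffine T)
    (h : HasNormalForm (α.image T) (M.image (image T))) : HasNormalForm α M := by
  obtain ⟨T', hT', hshape⟩ := h
  have himage : image T' ∘ image T = image (T' ∘ T) := funext fun _ => image_image
  exact ⟨T' ∘ T, hT'.comp hT, by simpa only [image_image, himage] using hshape⟩

end HasNormalForm

def affineMap₂ (a b c d e f : ℤ) (p : ℤ × ℤ) : ℤ × ℤ :=
  (a * p.1 + b * p.2 + e, c * p.1 + d * p.2 + f)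

/-- `u ↦ u A⁻¹` for the linear part `A` of `affineMap₂ a b c d e f` when `det A = 1`. -/
def dualMap₂ (a b c d : ℤ) (u : ℤ × ℤ) : ℤ × ℤ := (d * u.1 - c * u.2, a * u.2 - b * u.1)

section Transport

variable {a b c d e f : ℤ} (hdet : a * d - b * c = 1)
include hdet

lemma isLatticeAffine_affineMap₂ : IsLatticeAffine (affineMap₂ a b c d e f) :=
  ⟨a, b, c, d, e, f, Or.inl hdet, fun _ => rfl⟩

lemma affineMap₂_injective : Function.Injective (affineMap₂ a b c d e f) := by
  intro p q hpq
  simp only [affineMap₂, Prod.mk.injEq] at hpq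
  obtain ⟨h1, h2⟩ := hpq
  exact Prod.ext (by linear_combination d * h1 - b * h2 - (p.1 - q.1) * hdet)
    (by linear_combination a * h2 - c * h1 - (p.2 - q.2) * hdet)

lemma lval_dualMap₂_affineMap₂ (u p : ℤ × ℤ) :
    lval (dualMap₂ a b c d u) (affineMap₂ a b c d e f p) =
      lval u p + lval (dualMap₂ a b c d u) (e, f) := by
  simp only [lval, affineMap₂, dualMap₂]
  linear_combination (p.1 * u.1 + p.2 * u.2) * hdet

lemma isCoprime_dualMap₂ {u : ℤ × ℤ} (hu : IsCoprime u.1 u.2) :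
    IsCoprime (dualMap₂ a b c d u).1 (dualMap₂ a b c d u).2 := by
  obtain ⟨x, y, hxy⟩ := hu
  exact ⟨x * a + y * b, x * c + y * d, by
    simp only [dualMap₂]; linear_combination hxy + (x * u.1 + y * u.2) * hdet⟩

lemma notCollinear_affineMap₂_iff (p q r : ℤ × ℤ) :
    NotCollinear (affineMap₂ a b c d e f p) (affineMap₂ a b c d e f q)
      (affineMap₂ a b c d e f r) ↔ NotCollinear p q r := by
  have hcross : cross (affineMap₂ a b c d e f q - affineMap₂ a b c d e f p)
      (affineMap₂ a b c d e f r - affineMap₂ a b c d e f p) = cross (q - p) (r - p) := by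
    simp only [cross, affineMap₂, Prod.fst_sub, Prod.snd_sub]
    linear_combination ((q.1 - p.1) * (r.2 - p.2) - (q.2 - p.2) * (r.1 - p.1)) * hdet
  rw [notCollinear_iff_cross, notCollinear_iff_cross, hcross]

variable {α : Finset (ℤ × ℤ)} {M : Finset (Finset (ℤ × ℤ))} {u : ℤ × ℤ} {c₀ : ℤ}

lemma IsSupp.image_affineMap₂ (hs : IsSupp α u c₀) :
    IsSupp (α.image (affineMap₂ a b c d e f)) (dualMap₂ a b c d u)
      (c₀ + lval (dualMap₂ a b c d u) (e, f)) := by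
  refine ⟨isCoprime_dualMap₂ hdet hs.1, ?_⟩
  intro q hq
  obtain ⟨p, hp, rfl⟩ := mem_image.mp hq
  rw [lval_dualMap₂_affineMap₂ hdet]
  linarith [hs.2 p hp]

lemma filter_image_affineMap₂ :
    (α.image (affineMap₂ a b c d e f)).filter
        (fun x => lval (dualMap₂ a b c d u) x = c₀ + lval (dualMap₂ a b c d u) (e, f)) =
      (α.filter (fun x => lval u x = c₀)).image (affineMap₂ a b c d e f) := by
  rw [filter_image]
  congr 1
  exact filter_congr fun p _ => by rw [lval_dualMap₂_affineMap₂ hdet, add_left_inj]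

lemma IsMarkedBPolygon.image_affineMap₂ (h : IsMarkedBPolygon α M) :
    IsMarkedBPolygon (α.image (affineMap₂ a b c d e f))
      (M.image (image (affineMap₂ a b c d e f))) := by
  obtain ⟨⟨p, hp, q, hq, r, hr, hpqr⟩, hsides, htri⟩ := h
  refine ⟨⟨_, mem_image_of_mem _ hp, _, mem_image_of_mem _ hq, _, mem_image_of_mem _ hr,
      (notCollinear_affineMap₂_iff hdet p q r).mpr hpqr⟩, ?_, ?_⟩
  · intro s' hs'
    obtain ⟨s, hs, rfl⟩ := mem_image.mp hs'
    obtain ⟨u, c₀, hsupp, rfl, hcard⟩ := hsides s hs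
    refine ⟨_, _, hsupp.image_affineMap₂ hdet, (filter_image_affineMap₂ hdet).symm, ?_⟩
    rwa [card_image_of_injective _ (affineMap₂_injective hdet)]
  · intro p' hp' q' hq' r' hr' hpqr
    obtain ⟨p, hp, rfl⟩ := mem_image.mp hp'
    obtain ⟨q, hq, rfl⟩ := mem_image.mp hq'
    obtain ⟨r, hr, rfl⟩ := mem_image.mp hr'
    obtain ⟨s, hsM, u, c₀, hsupp, rfl, hpat⟩ :=
      htri p hp q hq r hr ((notCollinear_affineMap₂_iff hdet p q r).mp hpqr)
    refine ⟨_, mem_image_of_mem _ hsM, _, _, hsupp.image_affineMap₂ hdet,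
      (filter_image_affineMap₂ hdet).symm, ?_⟩
    simp only [lval_dualMap₂_affineMap₂ hdet, add_left_inj, add_right_comm _ _ (1 : ℤ)]
    exact hpat

end Transport

def IsMarkedLine (α : Finset (ℤ × ℤ)) (M : Finset (Finset (ℤ × ℤ))) (u : ℤ × ℤ) (c : ℤ) :
    Prop :=
  IsSupp α u c ∧ α.filter (fun x => lval u x = c) ∈ M

namespace IsMarkedBPolygon

variable {α : Finset (ℤ × ℤ)} {M : Finset (Finset (ℤ × ℤ))} (h : IsMarkedBPolygon α M)
include h

lemma exists_markedLine {p q r : ℤ × ℤ} (hp : p ∈ α) (hq : q ∈ α) (hr : r ∈ α)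
    (hpqr : NotCollinear p q r) :
    ∃ u c, IsMarkedLine α M u c ∧
      ((lval u p = c ∧ lval u q = c ∧ lval u r = c + 1) ∨
       (lval u p = c ∧ lval u r = c ∧ lval u q = c + 1) ∨
       (lval u q = c ∧ lval u r = c ∧ lval u p = c + 1)) := by
  obtain ⟨s, hsM, u, c, hsupp, rfl, hpat⟩ := h.2.2 p hp q hq r hr hpqr
  exact ⟨u, c, ⟨hsupp, hsM⟩, hpat⟩

section FarPoint

variable {u P Q r : ℤ × ℤ} {c : ℤ} (hsupp : IsSupp α u c) (hP : P ∈ α) (hQ : Q ∈ α)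
  (hPQ : P ≠ Q) (hPc : lval u P = c) (hQc : lval u Q = c) (hr : r ∈ α)
  (hrc : c + 2 ≤ lval u r)
include hsupp hP hQ hPQ hPc hQc hr hrc

lemma exists_markedLine_through_far :
    ∃ v c', IsMarkedLine α M v c' ∧ lval v r = c' ∧
      ((lval v P = c' ∧ lval v Q = c' + 1) ∨ (lval v Q = c' ∧ lval v P = c' + 1)) := by
  obtain ⟨v, c', hline, hpat⟩ :=
    h.exists_markedLine hP hQ hr (notCollinear_of_lval hsupp.1 hPQ hPc hQc (by omega))
  rcases hpat with ⟨hvP, hvQ, hvr⟩ | ⟨hvP, hvr, hvQ⟩ | ⟨hvQ, hvr, hvP⟩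
  · exfalso
    rcases eq_or_eq_neg_of_mem_line hline.1.1 hsupp.1 hPQ hvP hvQ (hPc.trans hQc.symm) with
      ⟨rfl, rfl⟩ | ⟨rfl, rfl⟩
    · omega
    · rw [lval_neg_left] at hvr; omega
  · exact ⟨v, c', hline, hvr, Or.inl ⟨hvP, hvQ⟩⟩
  · exact ⟨v, c', hline, hvr, Or.inr ⟨hvQ, hvP⟩⟩

lemma sub_eq_perp_of_far : Q - P = perp u ∨ Q - P = -perp u := by
  obtain ⟨v, c', -, -, hpat⟩ := h.exists_markedLine_through_far hsupp hP hQ hPQ hPc hQc hr hrc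
  obtain ⟨k, hk⟩ := exists_eq_smul_perp hsupp.1 (d := Q - P)
    (by rw [lval_sub_right, hPc, hQc, sub_self])
  have hvk : lval v (Q - P) = k * cross u v := by rw [hk, lval_smul_right, lval_perp]
  rw [lval_sub_right] at hvk
  have hk1 : k = 1 ∨ k = -1 := by
    rcases hpat with ⟨h1, h2⟩ | ⟨h1, h2⟩
    · exact Int.eq_one_or_neg_one_of_mul_eq_one (v := cross u v) (by linarith)
    · rcases Int.eq_one_or_neg_one_of_mul_eq_one (u := -k) (v := cross u v) (by linarith) with
        hk | hk <;> omega
  rcases hk1 with rfl | rfl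
  · exact Or.inl (by simpa using hk)
  · exact Or.inr (by simpa using hk)

end FarPoint

section AllFar

variable (hfar : ∀ u c, IsMarkedLine α M u c → ∃ r ∈ α, c + 2 ≤ lval u r)
include hfar

/-- `Y - X` and `r - X` are both primitive along their lines, which forces `|cross u v| = 1`
and hence `r` to lie at height `1` over the line of `u`. -/
lemma false_of_far_of_markedLine_through {u v X Y r : ℤ × ℤ} {c c' : ℤ}
    (hsupp : IsSupp α u c) (hX : X ∈ α) (hY : Y ∈ α) (hXc : lval u X = c)
    (hYc : lval u Y = c) (hr : r ∈ α) (hrc : c + 2 ≤ lval u r) (hline : IsMarkedLine α M v c')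
    (hvX : lval v X = c') (hvr : lval v r = c') (hvY : lval v Y = c' + 1) : False := by
  have hXY : X ≠ Y := by rintro rfl; omega
  have hXr : X ≠ r := by rintro rfl; omega
  obtain ⟨r₁, hr₁, hr₁c⟩ := hfar v c' hline
  have hvXY : lval v (Y - X) = 1 := by rw [lval_sub_right]; omega
  have huXr : 2 ≤ lval u (r - X) := by rw [lval_sub_right]; omega
  rcases h.sub_eq_perp_of_far hsupp hX hY hXY hXc hYc hr hrc with hYX | hYX <;>
    rcases h.sub_eq_perp_of_far hline.1 hX hr hXr hvX hvr hr₁ hr₁c with hrX | hrX <;>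
    simp only [hYX, hrX, lval_neg_right, lval_perp] at hvXY huXr <;> linarith [cross_swap u v]

lemma false_of_forall_far : False := by
  obtain ⟨p, hp, q, hq, r, hr, hpqr⟩ := h.1
  obtain ⟨u, c, hline, -⟩ := h.exists_markedLine hp hq hr hpqr
  obtain ⟨-, -, -, -, hcard⟩ := h.2.1 _ hline.2
  obtain ⟨P, hP, Q, hQ, hPQ⟩ := one_lt_card.mp hcard
  rw [mem_filter] at hP hQ
  obtain ⟨r, hr, hrc⟩ := hfar u c hline
  obtain ⟨v, c', hvline, hvr, ⟨hvP, hvQ⟩ | ⟨hvQ, hvP⟩⟩ :=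
    h.exists_markedLine_through_far hline.1 hP.1 hQ.1 hPQ hP.2 hQ.2 hr hrc
  · exact h.false_of_far_of_markedLine_through hfar hline.1 hP.1 hQ.1 hP.2 hQ.2 hr hrc hvline
      hvP hvr hvQ
  · exact h.false_of_far_of_markedLine_through hfar hline.1 hQ.1 hP.1 hQ.2 hP.2 hr hrc hvline
      hvQ hvr hvP

end AllFar

lemma exists_horizontal {u : ℤ × ℤ} {c : ℤ}
    (hline : IsMarkedLine α M u c) (hstrip : ∀ p ∈ α, lval u p ≤ c + 1) :
    ∃ T, IsLatticeAffine T ∧ IsMarkedBPolygon (α.image T) (M.image (image T)) ∧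
      (∀ p ∈ α.image T, p.2 = 0 ∨ p.2 = 1) ∧
      (α.image T).filter (fun p => p.2 = 0) ∈ M.image (image T) := by
  obtain ⟨x, y, hxy⟩ := hline.1.1
  have hdet : y * u.2 - -x * u.1 = 1 := by linear_combination hxy
  have hT : ∀ p, (affineMap₂ y (-x) u.1 u.2 0 (-c) p).2 = lval u p - c := fun p => by
    simp only [affineMap₂, lval]; ring
  refine ⟨affineMap₂ y (-x) u.1 u.2 0 (-c), isLatticeAffine_affineMap₂ hdet,
    h.image_affineMap₂ hdet, ?_, ?_⟩
  · intro q hq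
    obtain ⟨p, hp, rfl⟩ := mem_image.mp hq
    have := hline.1.2 p hp
    have := hstrip p hp
    rw [hT]; omega
  · rw [filter_image]
    convert mem_image_of_mem _ hline.2 using 2
    exact filter_congr fun p _ => by rw [hT, sub_eq_zero]

lemma eq_add_one_and_slanted_markedLine (htop : α.filter (fun p => p.2 = 1) ∉ M)
    {t₁ t₂ b : ℤ} (ht : t₁ < t₂) (ht₁ : (t₁, 1) ∈ α) (ht₂ : (t₂, 1) ∈ α) (hb : (b, 0) ∈ α) :
    t₂ = t₁ + 1 ∧ (IsMarkedLine α M (1, b - t₁) b ∨ IsMarkedLine α M (-1, t₂ - b) (-b)) := by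
  have hne : ((t₁, 1) : ℤ × ℤ) ≠ (t₂, 1) := by simp [ht.ne]
  obtain ⟨v, c, hline, hpat⟩ := h.exists_markedLine ht₁ ht₂ hb
    (notCollinear_of_lval isCoprime_zero_one hne (lval_zero_one _) (lval_zero_one _)
      (by simp [lval_zero_one]))
  have hcop : ∀ t : ℤ, IsCoprime ((1, b - t) : ℤ × ℤ).1 ((1, b - t) : ℤ × ℤ).2 :=
    fun _ => isCoprime_one_left
  have hbt : ∀ t : ℤ, ((b, 0) : ℤ × ℤ) ≠ (t, 1) := by simp
  have hlvl : ∀ t : ℤ, lval (1, b - t) (b, 0) = lval (1, b - t) (t, 1) := fun t => by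
    simp only [lval]; ring
  rcases hpat with ⟨h1, h2, h3⟩ | ⟨h1, h2, h3⟩ | ⟨h1, h2, h3⟩
  · exfalso
    rcases eq_or_eq_neg_of_mem_line hline.1.1 isCoprime_zero_one hne h1 h2
      (by simp [lval_zero_one]) with ⟨rfl, rfl⟩ | ⟨rfl, rfl⟩
    · have := hline.1.2 _ hb
      simp [lval_zero_one] at this
    · apply htop
      convert hline.2 using 2
      simp [lval]
  · rcases eq_or_eq_neg_of_mem_line hline.1.1 (hcop t₁) (hbt t₁) h2 h1 (hlvl t₁) with
      ⟨rfl, rfl⟩ | ⟨rfl, rfl⟩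
    · simp [lval] at h3
      exact ⟨by omega, Or.inl (by simpa [lval] using hline)⟩
    · simp [lval] at h3; omega
  · rcases eq_or_eq_neg_of_mem_line hline.1.1 (hcop t₂) (hbt t₂) h2 h1 (hlvl t₂) with
      ⟨rfl, rfl⟩ | ⟨rfl, rfl⟩
    · simp [lval] at h3; omega
    · simp [lval] at h3
      have hv : -(1, b - t₂) = ((-1 : ℤ), t₂ - b) := by ext <;> simp
      exact ⟨by omega, Or.inr (by simpa [lval, hv] using hline)⟩

end IsMarkedBPolygon

lemma exists_level_extremes {α : Finset (ℤ × ℤ)} {k : ℤ}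
    (hcard : 2 ≤ (α.filter (fun p => p.2 = k)).card) :
    ∃ lo hi, lo < hi ∧ (lo, k) ∈ α ∧ (hi, k) ∈ α ∧
      ∀ p ∈ α, p.2 = k → lo ≤ p.1 ∧ p.1 ≤ hi := by
  set S := (α.filter (fun p => p.2 = k)).image Prod.fst
  have hS : 1 < S.card := by
    rw [card_image_of_injOn]; · omega
    intro p hp q hq hpq
    exact Prod.ext hpq ((mem_filter.mp hp).2.trans (mem_filter.mp hq).2.symm)
  have hmem : ∀ x ∈ S, (x, k) ∈ α := by
    intro x hx
    obtain ⟨p, hp, rfl⟩ := mem_image.mp hx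
    rw [mem_filter] at hp
    rw [← hp.2]
    exact hp.1
  have hSne : S.Nonempty := card_pos.mp (by omega)
  refine ⟨S.min' hSne, S.max' hSne, min'_lt_max'_of_card S hS, hmem _ (min'_mem S hSne),
    hmem _ (max'_mem S hSne), fun p hp hpk => ?_⟩
  have hpS : p.1 ∈ S := mem_image_of_mem _ (mem_filter.mpr ⟨hp, hpk⟩)
  exact ⟨min'_le S _ hpS, le_max' S _ hpS⟩

def flatQuad (xb xB xt : ℤ) : Finset (ℤ × ℤ) := {(xb, 0), (xB, 0), (xt, 1), (xt + 1, 1)}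

section FlatQuad

variable {xb xB xt : ℤ}

lemma mem_flatQuad {p : ℤ × ℤ} (hp : p ∈ flatQuad xb xB xt) :
    (p.2 = 0 ∧ (p.1 = xb ∨ p.1 = xB)) ∨ (p.2 = 1 ∧ (p.1 = xt ∨ p.1 = xt + 1)) := by
  simp only [flatQuad, mem_insert, mem_singleton] at hp
  rcases hp with rfl | rfl | rfl | rfl <;> simp

lemma filter_flatQuad_bottom :
    (flatQuad xb xB xt).filter (fun p => p.2 = 0) = {(xb, 0), (xB, 0)} := by
  simp only [flatQuad, filter_insert, filter_singleton]
  split_ifs <;> first | omega | rfl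

lemma filter_flatQuad_left (hb : xb < xB) :
    (flatQuad xb xB xt).filter (fun p => lval (1, xb - xt) p = xb) = {(xb, 0), (xt, 1)} := by
  simp [flatQuad, filter_insert, filter_singleton, lval]
  split_ifs <;> first | omega | rfl

lemma filter_flatQuad_right (hb : xb < xB) :
    (flatQuad xb xB xt).filter (fun p => lval (-1, xt + 1 - xB) p = -xB) =
      {(xB, 0), (xt + 1, 1)} := by
  simp [flatQuad, filter_insert, filter_singleton, lval]
  split_ifs <;> first | omega | rfl

variable {u : ℤ × ℤ} {c : ℤ} (hsupp : IsSupp (flatQuad xb xB xt) u c)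
include hsupp

lemma IsSupp.filter_flatQuad_of_horizontal {P Q : ℤ × ℤ} (hP : P ∈ flatQuad xb xB xt)
    (hPQ : P ≠ Q) (hPc : lval u P = c) (hQc : lval u Q = c) (hPQ₂ : P.2 = Q.2) :
    (flatQuad xb xB xt).filter (fun p => lval u p = c) =
        (flatQuad xb xB xt).filter (fun p => p.2 = 0) ∨
      (flatQuad xb xB xt).filter (fun p => lval u p = c) =
        (flatQuad xb xB xt).filter (fun p => p.2 = 1) := by
  have hP₂ := mem_flatQuad hP
  rcases eq_or_eq_neg_of_mem_line hsupp.1 isCoprime_zero_one hPQ hPc hQc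
    (by simp [lval_zero_one, hPQ₂]) with ⟨rfl, rfl⟩ | ⟨rfl, rfl⟩
  · have := hsupp.2 (xb, 0) (by simp [flatQuad])
    simp only [lval_zero_one] at this
    exact Or.inl (filter_congr fun p _ => by simp only [lval_zero_one]; omega)
  · have := hsupp.2 (xt, 1) (by simp [flatQuad])
    simp only [lval_neg_left, lval_zero_one] at this
    exact Or.inr (filter_congr fun p _ => by simp only [lval_neg_left, lval_zero_one]; omega)

lemma IsSupp.filter_flatQuad_of_slanted (hb : xb < xB) {p q : ℤ}
    (hp : (p, 0) ∈ flatQuad xb xB xt) (hq : (q, 1) ∈ flatQuad xb xB xt)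
    (hpc : lval u (p, 0) = c) (hqc : lval u (q, 1) = c) :
    (flatQuad xb xB xt).filter (fun p => lval u p = c) =
        (flatQuad xb xB xt).filter (fun p => lval (1, xb - xt) p = xb) ∨
      (flatQuad xb xB xt).filter (fun p => lval u p = c) =
        (flatQuad xb xB xt).filter (fun p => lval (-1, xt + 1 - xB) p = -xB) := by
  have hp₁ := mem_flatQuad hp
  have hq₁ := mem_flatQuad hq
  simp only at hp₁ hq₁
  rcases eq_or_eq_neg_of_mem_line hsupp.1 isCoprime_one_left (by simp) hpc hqc
    (v := (1, p - q)) (by simp only [lval]; ring) with ⟨rfl, rfl⟩ | ⟨rfl, rfl⟩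
  · have hb₀ := hsupp.2 (xb, 0) (by simp [flatQuad])
    have ht₀ := hsupp.2 (xt, 1) (by simp [flatQuad])
    simp [lval] at hb₀ ht₀
    obtain ⟨rfl, rfl⟩ : p = xb ∧ q = xt := by omega
    exact Or.inl (by simp [lval])
  · have hb₀ := hsupp.2 (xB, 0) (by simp [flatQuad])
    have ht₀ := hsupp.2 (xt + 1, 1) (by simp [flatQuad])
    simp [lval] at hb₀ ht₀
    obtain ⟨rfl, rfl⟩ : p = xB ∧ q = xt + 1 := by omega
    have hv : -((1, p - (xt + 1)) : ℤ × ℤ) = (-1, xt + 1 - p) := by ext <;> simp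
    refine Or.inr (filter_congr fun x _ => ?_)
    rw [hv]
    simp [lval]

end FlatQuad

lemma eq_filter_of_isSide_flatQuad {xb xB xt : ℤ} (hb : xb < xB) {s : Finset (ℤ × ℤ)}
    (hs : IsSide (flatQuad xb xB xt) s) :
    s = (flatQuad xb xB xt).filter (fun p => p.2 = 0) ∨
      s = (flatQuad xb xB xt).filter (fun p => p.2 = 1) ∨
      s = (flatQuad xb xB xt).filter (fun p => lval (1, xb - xt) p = xb) ∨
      s = (flatQuad xb xB xt).filter (fun p => lval (-1, xt + 1 - xB) p = -xB) := by
  obtain ⟨u, c, hsupp, rfl, hcard⟩ := hs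
  obtain ⟨⟨p, y⟩, hP, ⟨q, y'⟩, hQ, hPQ⟩ := one_lt_card.mp hcard
  rw [mem_filter] at hP hQ
  rcases mem_flatQuad hP.1 with ⟨hy, -⟩ | ⟨hy, -⟩ <;>
    rcases mem_flatQuad hQ.1 with ⟨hy', -⟩ | ⟨hy', -⟩ <;>
    simp only at hy hy' <;> subst hy hy'
  · have := hsupp.filter_flatQuad_of_horizontal hP.1 hPQ hP.2 hQ.2 rfl; tauto
  · have := hsupp.filter_flatQuad_of_slanted hb hP.1 hQ.1 hP.2 hQ.2; tauto
  · have := hsupp.filter_flatQuad_of_slanted hb hQ.1 hP.1 hQ.2 hP.2; tauto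
  · have := hsupp.filter_flatQuad_of_horizontal hP.1 hPQ hP.2 hQ.2 rfl; tauto

lemma marked_eq_of_flatQuad {xb xB xt : ℤ} (hb : xb < xB) {M : Finset (Finset (ℤ × ℤ))}
    (hsides : ∀ s ∈ M, IsSide (flatQuad xb xB xt) s)
    (htop : (flatQuad xb xB xt).filter (fun p => p.2 = 1) ∉ M)
    (hbot : (flatQuad xb xB xt).filter (fun p => p.2 = 0) ∈ M)
    (hL : (flatQuad xb xB xt).filter (fun p => lval (1, xb - xt) p = xb) ∈ M)
    (hR : (flatQuad xb xB xt).filter (fun p => lval (-1, xt + 1 - xB) p = -xB) ∈ M) :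
    M = {{(xb, 0), (xB, 0)}, {(xb, 0), (xt, 1)}, {(xB, 0), (xt + 1, 1)}} := by
  rw [filter_flatQuad_bottom] at hbot
  rw [filter_flatQuad_left hb] at hL
  rw [filter_flatQuad_right hb] at hR
  ext s
  simp only [mem_insert, mem_singleton]
  constructor
  · intro hs
    rcases eq_filter_of_isSide_flatQuad hb (hsides s hs) with rfl | rfl | rfl | rfl
    exacts [Or.inl (filter_flatQuad_bottom), absurd hs htop,
      Or.inr (Or.inl (filter_flatQuad_left hb)), Or.inr (Or.inr (filter_flatQuad_right hb))]
  · rintro (rfl | rfl | rfl) <;> assumption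

namespace IsMarkedBPolygon

variable {α : Finset (ℤ × ℤ)} {M : Finset (Finset (ℤ × ℤ))} (h : IsMarkedBPolygon α M)
  (hlev : ∀ p ∈ α, p.2 = 0 ∨ p.2 = 1) (hbot : α.filter (fun p => p.2 = 0) ∈ M)
include h hlev hbot

section Flat

variable (htop : α.filter (fun p => p.2 = 1) ∉ M)
  (htop₂ : 2 ≤ (α.filter (fun p => p.2 = 1)).card)
include htop htop₂

lemma exists_eq_flatQuad :
    ∃ xb xB xt, xb < xB ∧ α = flatQuad xb xB xt ∧
      IsMarkedLine α M (1, xb - xt) xb ∧ IsMarkedLine α M (-1, xt + 1 - xB) (-xB) := by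
  obtain ⟨-, -, -, -, hbot₂⟩ := h.2.1 _ hbot
  obtain ⟨xb, xB, hb, hxb, hxB, hbnd⟩ := exists_level_extremes hbot₂
  obtain ⟨xt, xT, ht, hxt, hxT, htnd⟩ := exists_level_extremes htop₂
  obtain ⟨rfl, -⟩ := h.eq_add_one_and_slanted_markedLine htop ht hxt hxT hxb
  have hbottom : ∀ x, (x, 0) ∈ α →
      (IsMarkedLine α M (1, x - xt) x ∧ x = xb) ∨
        (IsMarkedLine α M (-1, xt + 1 - x) (-x) ∧ x = xB) := by
    intro x hx
    have := hbnd _ hx rfl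
    rcases (h.eq_add_one_and_slanted_markedLine htop ht hxt hxT hx).2 with hL | hR
    · have := hL.1.2 _ hxb
      simp [lval] at this
      exact Or.inl ⟨hL, by omega⟩
    · have := hR.1.2 _ hxB
      simp [lval] at this
      exact Or.inr ⟨hR, by omega⟩
  have hL : IsMarkedLine α M (1, xb - xt) xb := by
    rcases hbottom xb hxb with ⟨hL, -⟩ | ⟨-, h'⟩
    exacts [hL, by omega]
  have hR : IsMarkedLine α M (-1, xt + 1 - xB) (-xB) := by
    rcases hbottom xB hxB with ⟨-, h'⟩ | ⟨hR, -⟩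
    exacts [by omega, hR]
  refine ⟨xb, xB, xt, hb, ?_, hL, hR⟩
  ext ⟨x, y⟩
  simp only [flatQuad, mem_insert, mem_singleton, Prod.mk.injEq]
  constructor
  · intro hp
    rcases hlev _ hp with hy | hy <;> simp only at hy <;> subst hy
    · rcases hbottom x hp with ⟨-, rfl⟩ | ⟨-, rfl⟩ <;> simp
    · have := htnd _ hp rfl
      omega
  · rintro (⟨rfl, rfl⟩ | ⟨rfl, rfl⟩ | ⟨rfl, rfl⟩ | ⟨rfl, rfl⟩) <;> assumption

lemma hasNormalForm_of_flat : HasNormalForm α M := by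
  obtain ⟨xb, xB, xt, hb, rfl, hL, hR⟩ := h.exists_eq_flatQuad hlev hbot htop htop₂
  have hM := marked_eq_of_flatQuad hb h.2.1 htop hbot hL.2 hR.2
  rcases (show xb + 1 ≤ xB from hb).eq_or_lt with rfl | hb₁
  · have hv : -((1, xb - xt) : ℤ × ℤ) = (-1, xt + 1 - (xb + 1)) := by ext <;> simp
    refine HasNormalForm.of_shape
      (Or.inr (Or.inl ⟨(1, xb - xt), xb, hL.1, hv ▸ hR.1, hL.2, ?_, fun p hp => ?_⟩))
    · convert hR.2 using 2
      rw [← hv, lval_neg_left]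
      omega
    · simp only [flatQuad, mem_insert, mem_singleton] at hp
      rcases hp with rfl | rfl | rfl | rfl <;> (simp only [lval]; omega)
  · have hS : ∀ x y : ℤ,
        affineMap₂ 1 (xb - xt) 0 1 (-xb) 0 (x, y) = (x + (xb - xt) * y - xb, y) :=
      fun x y => by simp only [affineMap₂, Prod.mk.injEq]; constructor <;> ring
    have h₁ : xt + 1 + (xb - xt) - xb = 1 := by ring
    refine ⟨affineMap₂ 1 (xb - xt) 0 1 (-xb) 0, isLatticeAffine_affineMap₂ (by ring),
      Or.inr (Or.inr ⟨xB - xb, by omega, ?_, ?_⟩)⟩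
    · simp [flatQuad, hS, h₁]
    · rw [hM]; simp [hS, h₁]

end Flat

lemma hasNormalForm_of_horizontal : HasNormalForm α M := by
  have hsupp : IsSupp α (0, 1) 0 := ⟨isCoprime_zero_one, fun p hp => by
    rw [lval_zero_one]; rcases hlev p hp with hy | hy <;> omega⟩
  have hbot' : α.filter (fun x => lval (0, 1) x = 0) = α.filter (fun x => x.2 = 0) := by
    simp only [lval_zero_one]
  have hmem_top : ∀ p ∈ α, p.2 ≠ 0 → p ∈ α.filter (fun x => x.2 = 1) := fun p hp hp0 =>
    mem_filter.mpr ⟨hp, (hlev p hp).resolve_left hp0⟩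
  rcases Nat.lt_or_ge (α.filter (fun p => p.2 = 1)).card 2 with htop₁ | htop₂
  · have htop_ne : (α.filter (fun p => p.2 = 1)).Nonempty := by
      by_contra! hempty
      obtain ⟨p, hp, q, hq, r, hr, hpqr⟩ := h.1
      have hflat : ∀ x ∈ α, lval (0, 1) x = 0 := fun x hx => by
        by_contra hx0
        rw [lval_zero_one] at hx0
        simpa [hempty] using hmem_top x hx hx0
      exact not_notCollinear_of_lval isCoprime_zero_one (hflat p hp) (hflat q hq) (hflat r hr)
        hpqr
    obtain ⟨apex, hapex⟩ := card_eq_one.mp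
      (show (α.filter (fun p => p.2 = 1)).card = 1 by have := htop_ne.card_pos; omega)
    have hapex_mem : apex ∈ α.filter (fun p => p.2 = 1) := hapex ▸ mem_singleton_self apex
    rw [mem_filter] at hapex_mem
    refine HasNormalForm.of_shape (Or.inl ⟨_, hbot, (0, 1), 0, hsupp, hbot'.symm, apex,
      hapex_mem.1, by rw [lval_zero_one, hapex_mem.2, zero_add], fun p hp hps => ?_⟩)
    have := hmem_top p hp fun hp0 => hps (mem_filter.mpr ⟨hp, hp0⟩)
    rwa [hapex, mem_singleton] at this
  · by_cases htop : α.filter (fun p => p.2 = 1) ∈ M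
    · refine HasNormalForm.of_shape (Or.inr (Or.inl ⟨(0, 1), 0, hsupp,
        ⟨isCoprime_zero_one.neg_left.neg_right, fun p hp => ?_⟩, hbot' ▸ hbot,
        by simpa only [lval_zero_one, zero_add] using htop,
        fun p hp => by simpa only [lval_zero_one, zero_add] using hlev p hp⟩))
      rw [lval_neg_left, lval_zero_one]
      rcases hlev p hp with hy | hy <;> omega
    · exact h.hasNormalForm_of_flat hlev hbot htop htop₂

end IsMarkedBPolygon

/-- classification of marked B-polygons: up to a lattice-affine
transformation (an affine map with unimodular linear part), a 2-dimensional marked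
B-polygon is a B₁-marked polygon, a B₂-marked polygon, or a flat border marked polygon. -/
theorem stmt10 (α : Finset (ℤ × ℤ)) (M : Finset (Finset (ℤ × ℤ)))
    (h : IsMarkedBPolygon α M) :
    ∃ T : (ℤ × ℤ) → (ℤ × ℤ),
      (∃ a b c d e f : ℤ, (a * d - b * c = 1 ∨ a * d - b * c = -1) ∧
        ∀ p, T p = (a * p.1 + b * p.2 + e, c * p.1 + d * p.2 + f)) ∧
      (B1Shape (α.image T) (M.image (Finset.image T)) ∨
       B2Shape (α.image T) (M.image (Finset.image T)) ∨
       FlatShape (α.image T) (M.image (Finset.image T))) := by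
  by_cases hstrip : ∃ u c, IsMarkedLine α M u c ∧ ∀ p ∈ α, lval u p ≤ c + 1
  · obtain ⟨u, c, hline, hle⟩ := hstrip
    obtain ⟨T, hT, hT', hlev, hbot⟩ := h.exists_horizontal hline hle
    exact HasNormalForm.of_image hT (hT'.hasNormalForm_of_horizontal hlev hbot)
  · refine (h.false_of_forall_far fun u c hline => ?_).elim
    by_contra! hnear
    exact hstrip ⟨u, c, hline, fun p hp => by have := hnear p hp; omega⟩
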